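/- If u ∼ N(μ, Σ) in ℝⁿ and ‖μ‖ + sqrt(Q_{χ²_n}(1-ε)) · sqrt(λ_max(Σ)) ≤ u_max, then P(‖u‖ ≤ u_max) ≥ 1 - ε. -/

import Mathlib

/-! Write `u = μ + S w` with `w` standard Gaussian and `S Sᵀ = Σ`. By Cauchy–Schwarz and the
Rayleigh bound `x ⬝ Σ x ≤ λ_max(Σ) ‖x‖²`, `‖S w‖ ≤ √λ_max(Σ) ‖w‖`, so the event
`‖w‖² ≤ Q_{χ²_n}(1-ε)` is contained in `‖u‖ ≤ u_max`; by right-continuity of the cdf of `‖w‖²`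
the former has probability at least `1 - ε`. -/

open Matrix MeasureTheory

/-- The standard Gaussian measure on `ℝⁿ` (product of standard real Gaussians). -/
noncomputable def stdGaussian (n : ℕ) : Measure (Fin n → ℝ) :=
  Measure.pi fun _ => ProbabilityTheory.gaussianReal 0 1

/-- Euclidean norm on `Fin n → ℝ`. -/
noncomputable def euclNorm {n : ℕ} (v : Fin n → ℝ) : ℝ :=
  Real.sqrt (∑ i, (v i) ^ 2)

/-- The `p`-quantile of a real random variable `X` under measure `P`. -/
noncomputable def quantile {Ω : Type*} [MeasurableSpace Ω] (P : Measure Ω)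
    (X : Ω → ℝ) (p : ℝ) : ℝ :=
  sInf {t : ℝ | p ≤ (P {ω | X ω ≤ t}).toReal}

/-- The `p`-quantile of the chi-squared distribution with `n` degrees of freedom. -/
noncomputable def chiSqQuantile (n : ℕ) (p : ℝ) : ℝ :=
  quantile (stdGaussian n) (fun x => ∑ i, (x i) ^ 2) p

/-- The largest eigenvalue of a real symmetric matrix. -/
noncomputable def lambdaMax {n : ℕ} (A : Matrix (Fin n) (Fin n) ℝ)
    (hA : A.IsHermitian) : ℝ := ⨆ i, hA.eigenvalues i

open scoped MatrixOrder

lemma le_measure_le_quantile {Ω : Type*} [MeasurableSpace Ω] (P : Measure Ω)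
    [IsProbabilityMeasure P] {X : Ω → ℝ} (hX : Measurable X) {p : ℝ} (hp : p < 1) :
    p ≤ (P {ω | X ω ≤ quantile P X p}).toReal := by
  set F := ProbabilityTheory.cdf (P.map X)
  have hF : ∀ t, (P {ω | X ω ≤ t}).toReal = F t := fun t => by
    have := Measure.isProbabilityMeasure_map (μ := P) hX.aemeasurable
    rw [ProbabilityTheory.cdf_eq_real, measureReal_def, Measure.map_apply hX measurableSet_Iic]
    rfl
  simp only [quantile, hF]
  set q := sInf {t | p ≤ F t}
  have hne : {t | p ≤ F t}.Nonempty :=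
    ((ProbabilityTheory.tendsto_cdf_atTop _).eventually_const_le hp).exists
  have h_above : ∀ t ∈ Set.Ioi q, p ≤ F t := fun t ht => by
    obtain ⟨s, hs, hst⟩ := exists_lt_of_csInf_lt hne ht
    exact hs.trans (F.mono hst.le)
  -- the cdf is right-continuous, so the constraint passes to the infimum
  exact ge_of_tendsto ((F.right_continuous q).mono Set.Ioi_subset_Ici_self)
    (eventually_nhdsWithin_of_forall h_above)

lemma eigenvalues_le_lambdaMax {n : ℕ} {A : Matrix (Fin n) (Fin n) ℝ} (hA : A.IsHermitian)
    (i : Fin n) : hA.eigenvalues i ≤ lambdaMax A hA :=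
  le_ciSup (Set.finite_range _).bddAbove i

lemma le_lambdaMax_smul_one {n : ℕ} {A : Matrix (Fin n) (Fin n) ℝ} (hA : A.IsHermitian) :
    A ≤ lambdaMax A hA • 1 := by
  rw [← Algebra.algebraMap_eq_smul_one]
  refine le_algebraMap_of_spectrum_le (fun x hx => ?_) hA.isSelfAdjoint
  obtain ⟨i, rfl⟩ := hA.spectrum_real_eq_range_eigenvalues ▸ hx
  exact eigenvalues_le_lambdaMax hA i

lemma dotProduct_mulVec_le_lambdaMax {n : ℕ} {A : Matrix (Fin n) (Fin n) ℝ}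
    (hA : A.IsHermitian) (x : Fin n → ℝ) : x ⬝ᵥ (A *ᵥ x) ≤ lambdaMax A hA * (x ⬝ᵥ x) := by
  have h := (le_iff.mp (le_lambdaMax_smul_one hA)).dotProduct_mulVec_nonneg x
  simpa [sub_mulVec, smul_mulVec, dotProduct_sub, dotProduct_smul] using h

lemma euclNorm_eq_sqrt_dotProduct {n : ℕ} (v : Fin n → ℝ) : euclNorm v = √(v ⬝ᵥ v) := by
  simp only [euclNorm, dotProduct, sq]

lemma euclNorm_eq_norm_toLp {n : ℕ} (v : Fin n → ℝ) : euclNorm v = ‖WithLp.toLp 2 v‖ := by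
  simp [euclNorm, EuclideanSpace.norm_eq]

lemma euclNorm_nonneg {n : ℕ} (v : Fin n → ℝ) : 0 ≤ euclNorm v := Real.sqrt_nonneg _

lemma euclNorm_add_le {n : ℕ} (v w : Fin n → ℝ) : euclNorm (v + w) ≤ euclNorm v + euclNorm w := by
  simp only [euclNorm_eq_norm_toLp, WithLp.toLp_add]
  exact norm_add_le _ _

lemma dotProduct_le_euclNorm_mul {n : ℕ} (v w : Fin n → ℝ) :
    v ⬝ᵥ w ≤ euclNorm v * euclNorm w :=
  Real.sum_mul_le_sqrt_mul_sqrt _ v w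

lemma euclNorm_mulVec_le {m n : ℕ} (A : Matrix (Fin m) (Fin n) ℝ) (hA : (A * Aᵀ).IsHermitian)
    (w : Fin n → ℝ) : euclNorm (A *ᵥ w) ≤ √(lambdaMax (A * Aᵀ) hA) * euclNorm w := by
  set y := A *ᵥ w
  set L := lambdaMax (A * Aᵀ) hA
  have hy_nonneg : 0 ≤ y ⬝ᵥ y := by simpa using dotProduct_self_star_nonneg y
  have h_transpose : euclNorm (Aᵀ *ᵥ y) ≤ √L * euclNorm y := by
    rw [euclNorm_eq_sqrt_dotProduct, euclNorm_eq_sqrt_dotProduct,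
      ← Real.sqrt_mul' _ hy_nonneg]
    refine Real.sqrt_le_sqrt ?_
    rw [dotProduct_mulVec, vecMul_transpose, mulVec_mulVec, dotProduct_comm]
    exact dotProduct_mulVec_le_lambdaMax hA y
  have h_sq : euclNorm y ^ 2 ≤ √L * euclNorm y * euclNorm w := calc
    euclNorm y ^ 2 = (Aᵀ *ᵥ y) ⬝ᵥ w := by
      rw [euclNorm_eq_sqrt_dotProduct, Real.sq_sqrt hy_nonneg,
        mulVec_transpose, ← dotProduct_mulVec]
    _ ≤ euclNorm (Aᵀ *ᵥ y) * euclNorm w := dotProduct_le_euclNorm_mul _ _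
    _ ≤ √L * euclNorm y * euclNorm w := by gcongr; exact euclNorm_nonneg w
  rcases (euclNorm_nonneg y).eq_or_lt with hy | hy
  · rw [← hy]; exact mul_nonneg (Real.sqrt_nonneg _) (euclNorm_nonneg w)
  · nlinarith

instance isProbabilityMeasure_stdGaussian (n : ℕ) : IsProbabilityMeasure (stdGaussian n) := by
  unfold stdGaussian
  infer_instance

/-- If `u ∼ N(μ, Σ)` in `ℝⁿ` (realized as `u = μ + Σ^{1/2} w` for standard Gaussian `w`)
and `‖μ‖ + √(Q_{χ²ₙ}(1-ε)) · √(λ_max(Σ)) ≤ u_max`, then `P(‖u‖ ≤ u_max) ≥ 1 - ε`. -/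
theorem gaussian_norm_chance_constraint {n : ℕ}
    (μ : Fin n → ℝ) (Sig Sighalf : Matrix (Fin n) (Fin n) ℝ)
    (hSig : Sig.PosSemidef) (hhalf : Sighalf * Sighalfᵀ = Sig)
    (ε : ℝ) (hε : ε ∈ Set.Ioo (0 : ℝ) 1) (umax : ℝ)
    (hbound : euclNorm μ + Real.sqrt (chiSqQuantile n (1 - ε)) *
        Real.sqrt (lambdaMax Sig hSig.1) ≤ umax) :
    1 - ε ≤ ((stdGaussian n) {w | euclNorm (μ + Sighalf.mulVec w) ≤ umax}).toReal := by
  subst hhalf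
  have h_chiSq := le_measure_le_quantile (stdGaussian n)
    (by fun_prop : Measurable fun w : Fin n → ℝ => ∑ i, w i ^ 2) (by linarith [hε.1] : 1 - ε < 1)
  refine h_chiSq.trans (ENNReal.toReal_mono (measure_ne_top _ _) (measure_mono fun w hw => ?_))
  have hw : euclNorm w ≤ √(chiSqQuantile n (1 - ε)) := Real.sqrt_le_sqrt hw
  calc euclNorm (μ + Sighalf *ᵥ w)
      ≤ euclNorm μ + euclNorm (Sighalf *ᵥ w) := euclNorm_add_le _ _
    _ ≤ euclNorm μ + √(lambdaMax _ hSig.1) * euclNorm w := by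
        grw [euclNorm_mulVec_le Sighalf hSig.1 w]
    _ ≤ euclNorm μ + √(chiSqQuantile n (1 - ε)) * √(lambdaMax _ hSig.1) := by
        rw [mul_comm]; gcongr
    _ ≤ umax := hbound
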